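/- arXiv:1705.11182 — 5 statements merged into one kernel-verified Lean document; each statement's English description precedes it below -/
import Mathlib

section
/- Let ℓ ≥ 0, α ∈ (0,1), and suppose f : (0,∞) × D × D → [0,∞) satisfies f(t,x,y) ≤ M t^{-ℓ/2} exp(-|x-y|²/(Mt)) for all t > 0 and x,y ∈ D ⊆ ℝ^d. Then there is a constant c₁ = c₁(M,ℓ,α) > 0 such that ∫_0^∞ f(t^{1/α} s, x, y) g(α,s) ds ≤ c₁ · min( t^{-ℓ/(2α)}, t / |x-y|^{ℓ+2α} ) for all t > 0 and x,y ∈ D. -/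
/-!
Write `T = t^{1/α}`. Dropping the Gaussian factor gives `f(Ts) ≤ M T^{-ℓ/2} s^{-ℓ/2}`, so the
on-diagonal bound is `M t^{-ℓ/(2α)} ∫ s^{-ℓ/2} g(s) ds`; this moment is finite since it is
finite on `(0,1]` and `s^{-ℓ/2} ≤ 1` on `(1,∞)`, where `g` is integrable. Off the diagonal
the tail bound `g(s) ≤ ĉ s^{-1-α}` leaves
`∫_0^∞ s^{-(b+1)} e^{-ρ/s} ds = Γ(b) ρ^{-b}` with `b = ℓ/2 + α` and `ρ = |x-y|²/(M T)`
(substitute `s ↦ 1/s` in the Gamma integral), and `T^{-ℓ/2} (M T)^b = M^b t`.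
-/

open MeasureTheory Real Set

theorem setIntegral_le_const_mul_setIntegral {X : Type*} [MeasurableSpace X] {μ : Measure X}
    {F G : X → ℝ} {s : Set X} {C : ℝ} (hs : MeasurableSet s) (hG : IntegrableOn G s μ)
    (hF0 : ∀ x ∈ s, 0 ≤ F x) (hFG : ∀ x ∈ s, F x ≤ C * G x) :
    ∫ x in s, F x ∂μ ≤ C * ∫ x in s, G x ∂μ := by
  rw [← integral_const_mul]
  exact integral_mono_of_nonneg ((ae_restrict_iff' hs).mpr (ae_of_all _ hF0)) (hG.const_mul C)
    ((ae_restrict_iff' hs).mpr (ae_of_all _ hFG))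

/-- The integrand of `integral_comp_rpow_Ioi` with `p = -1` for the Gamma integrand
`u ^ (b - 1) * exp (-(c * u))`. -/
theorem rpow_neg_add_one_mul_exp_neg_div_eq {b c s : ℝ} (hs : 0 < s) :
    (|(-1 : ℝ)| * s ^ ((-1 : ℝ) - 1)) • ((s ^ (-1 : ℝ)) ^ (b - 1) * exp (-(c * s ^ (-1 : ℝ))))
      = s ^ (-(b + 1)) * exp (-(c / s)) := by
  rw [smul_eq_mul, ← rpow_mul hs.le, ← mul_assoc, abs_neg, abs_one, one_mul, ← rpow_add hs,
    rpow_neg_one, ← div_eq_mul_inv]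
  ring_nf

theorem integrableOn_rpow_neg_add_one_mul_exp_neg_div {b c : ℝ} (hb : 0 < b) (hc : 0 < c) :
    IntegrableOn (fun s => s ^ (-(b + 1)) * exp (-(c / s))) (Ioi 0) := by
  have hgamma : IntegrableOn (fun u : ℝ => u ^ (b - 1) * exp (-(c * u))) (Ioi 0) := by
    simpa [neg_mul] using integrableOn_rpow_mul_exp_neg_mul_rpow (p := 1) (by linarith) one_pos hc
  exact ((integrableOn_Ioi_comp_rpow_iff _ (by norm_num : (-1 : ℝ) ≠ 0)).mpr hgamma).congr_fun
    (fun s hs => rpow_neg_add_one_mul_exp_neg_div_eq hs) measurableSet_Ioi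

theorem integral_rpow_neg_add_one_mul_exp_neg_div {b c : ℝ} (hb : 0 < b) (hc : 0 < c) :
    ∫ s in Ioi 0, s ^ (-(b + 1)) * exp (-(c / s)) = Gamma b * c ^ (-b) := by
  rw [← setIntegral_congr_fun measurableSet_Ioi
      (fun s hs => rpow_neg_add_one_mul_exp_neg_div_eq hs),
    integral_comp_rpow_Ioi (fun u => u ^ (b - 1) * exp (-(c * u))) (by norm_num),
    integral_rpow_mul_exp_neg_mul_Ioi hb hc, one_div, inv_rpow hc.le, rpow_neg hc.le, mul_comm]

theorem integrableOn_Ioi_rpow_neg_mul {g : ℝ → ℝ} {p : ℝ} (hp : 0 ≤ p)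
    (hg : IntegrableOn g (Ioi 0)) (hg01 : IntegrableOn (fun s => s ^ (-p) * g s) (Ioc 0 1)) :
    IntegrableOn (fun s => s ^ (-p) * g s) (Ioi 0) := by
  rw [← Ioc_union_Ioi_eq_Ioi zero_le_one]
  refine hg01.union (Integrable.bdd_mul (c := 1) (hg.mono_set (Ioi_subset_Ioi zero_le_one)) ?_ ?_)
  · exact (continuousOn_id.rpow_const fun s hs => Or.inl (zero_lt_one.trans hs).ne')
      |>.aestronglyMeasurable measurableSet_Ioi
  · filter_upwards [ae_restrict_mem measurableSet_Ioi] with s hs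
    rw [norm_of_nonneg (rpow_nonneg (zero_le_one.trans hs.le) _)]
    exact rpow_le_one_of_one_le_of_nonpos hs.le (neg_nonpos.mpr hp)

section Subordination

variable {φ g : ℝ → ℝ} {M T p : ℝ}

theorem setIntegral_Ioi_comp_mul_mul_le_of_le_rpow (hT : 0 < T) (hg0 : ∀ s, 0 < s → 0 ≤ g s)
    (hmom : IntegrableOn (fun s => s ^ (-p) * g s) (Ioi 0))
    (hφ0 : ∀ τ, 0 < τ → 0 ≤ φ τ) (hφ : ∀ τ, 0 < τ → φ τ ≤ M * τ ^ (-p)) :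
    ∫ s in Ioi 0, φ (T * s) * g s ≤ M * T ^ (-p) * ∫ s in Ioi 0, s ^ (-p) * g s := by
  refine setIntegral_le_const_mul_setIntegral measurableSet_Ioi hmom
    (fun s hs => mul_nonneg (hφ0 _ (mul_pos hT hs)) (hg0 s hs)) fun s (hs : 0 < s) => ?_
  calc φ (T * s) * g s ≤ M * (T * s) ^ (-p) * g s :=
        mul_le_mul_of_nonneg_right (hφ _ (mul_pos hT hs)) (hg0 s hs)
    _ = M * T ^ (-p) * (s ^ (-p) * g s) := by rw [mul_rpow hT.le hs.le]; ring

theorem setIntegral_Ioi_comp_mul_mul_le_of_le_gaussian {α c r : ℝ} (hM : 0 < M) (hT : 0 < T)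
    (hr : 0 < r) (hpα : 0 < p + α) (hg0 : ∀ s, 0 < s → 0 ≤ g s)
    (hg : ∀ s, 0 < s → g s ≤ c * s ^ (-1 - α))
    (hφ0 : ∀ τ, 0 < τ → 0 ≤ φ τ)
    (hφ : ∀ τ, 0 < τ → φ τ ≤ M * τ ^ (-p) * exp (-r ^ 2 / (M * τ))) :
    ∫ s in Ioi 0, φ (T * s) * g s ≤
      c * Gamma (p + α) * M ^ (1 + p + α) * T ^ α / r ^ (2 * (p + α)) := by
  set ρ := r ^ 2 / (M * T) with hρ
  have hρ0 : 0 < ρ := by positivity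
  have hc : 0 ≤ c := by simpa using (hg0 1 one_pos).trans (hg 1 one_pos)
  calc ∫ s in Ioi 0, φ (T * s) * g s
      ≤ M * c * T ^ (-p) * ∫ s in Ioi 0, s ^ (-(p + α + 1)) * exp (-(ρ / s)) := by
        refine setIntegral_le_const_mul_setIntegral measurableSet_Ioi
          (integrableOn_rpow_neg_add_one_mul_exp_neg_div hpα hρ0)
          (fun s hs => mul_nonneg (hφ0 _ (mul_pos hT hs)) (hg0 s hs)) fun s (hs : 0 < s) => ?_
        have hexp : -r ^ 2 / (M * (T * s)) = -(ρ / s) := by rw [hρ]; field_simp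
        calc φ (T * s) * g s ≤ M * (T * s) ^ (-p) * exp (-(ρ / s)) * (c * s ^ (-1 - α)) := by
              rw [← hexp]
              exact mul_le_mul (hφ _ (mul_pos hT hs)) (hg s hs) (hg0 s hs) (by positivity)
          _ = M * c * T ^ (-p) * (s ^ (-(p + α + 1)) * exp (-(ρ / s))) := by
              rw [mul_rpow hT.le hs.le, show -(p + α + 1) = -p + (-1 - α) by ring, rpow_add hs]
              ring
    _ = M * c * T ^ (-p) * (Gamma (p + α) * ((M * T) ^ (p + α) / r ^ (2 * (p + α)))) := by
        rw [integral_rpow_neg_add_one_mul_exp_neg_div hpα hρ0, rpow_neg hρ0.le, ← inv_rpow hρ0.le,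
          hρ, inv_div, div_rpow (by positivity) (by positivity), rpow_mul hr.le, rpow_two]
    _ = c * Gamma (p + α) * M ^ (1 + (p + α)) * T ^ (-p + (p + α)) / r ^ (2 * (p + α)) := by
        rw [mul_rpow hM.le hT.le, rpow_add hM 1, rpow_add hT (-p), rpow_one]
        ring
    _ = c * Gamma (p + α) * M ^ (1 + p + α) * T ^ α / r ^ (2 * (p + α)) := by ring_nf

end Subordination

theorem subordinated_gaussian_bound_general {d : ℕ} (D : Set (EuclideanSpace ℝ (Fin d)))
    (α ℓ M chat : ℝ) (hα : α ∈ Ioo (0 : ℝ) 1) (hℓ : 0 ≤ ℓ) (hM : 0 < M) (hchat : 0 < chat)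
    (g : ℝ → ℝ) (hgnn : ∀ s : ℝ, 0 < s → 0 ≤ g s)
    (hgi : IntegrableOn g (Ioi 0))
    (hgb : ∀ s : ℝ, 0 < s → g s ≤ chat * s ^ (-1 - α))
    (hgl : IntegrableOn (fun s : ℝ => s ^ (-(ℓ / 2)) * g s) (Ioc 0 1))
    (f : ℝ → EuclideanSpace ℝ (Fin d) → EuclideanSpace ℝ (Fin d) → ℝ)
    (hf0 : ∀ t : ℝ, 0 < t → ∀ x ∈ D, ∀ y ∈ D, 0 ≤ f t x y)
    (hfb : ∀ t : ℝ, 0 < t → ∀ x ∈ D, ∀ y ∈ D,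
      f t x y ≤ M * t ^ (-(ℓ / 2)) * Real.exp (-(dist x y) ^ 2 / (M * t))) :
    ∃ c₁ : ℝ, 0 < c₁ ∧ ∀ t : ℝ, 0 < t → ∀ x ∈ D, ∀ y ∈ D,
      (∫ s in Ioi (0 : ℝ), f (t ^ (1 / α) * s) x y * g s) ≤ c₁ * t ^ (-(ℓ / (2 * α))) ∧
      (x ≠ y →
        (∫ s in Ioi (0 : ℝ), f (t ^ (1 / α) * s) x y * g s)
          ≤ c₁ * t / dist x y ^ (ℓ + 2 * α)) := by
  obtain ⟨hα0, -⟩ := hα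
  set C₀ := ∫ s in Ioi 0, s ^ (-(ℓ / 2)) * g s
  have hC₀ : 0 ≤ C₀ := setIntegral_nonneg measurableSet_Ioi fun s hs =>
    mul_nonneg (rpow_nonneg (le_of_lt hs) _) (hgnn s hs)
  set K := chat * Gamma (ℓ / 2 + α) * M ^ (1 + ℓ / 2 + α)
  have hK : 0 ≤ K := by positivity
  refine ⟨M * C₀ + K + 1, by positivity, fun t ht x hx y hy => ⟨?_, fun hxy => ?_⟩⟩
  all_goals have hT : 0 < t ^ (1 / α) := rpow_pos_of_pos ht _
  · have hfb' (τ : ℝ) (hτ : 0 < τ) : f τ x y ≤ M * τ ^ (-(ℓ / 2)) :=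
      (hfb τ hτ x hx y hy).trans <| mul_le_of_le_one_right (by positivity) <| exp_le_one_iff.mpr <|
        div_nonpos_of_nonpos_of_nonneg (neg_nonpos.mpr (sq_nonneg _)) (by positivity)
    calc ∫ s in Ioi 0, f (t ^ (1 / α) * s) x y * g s
        ≤ M * (t ^ (1 / α)) ^ (-(ℓ / 2)) * C₀ :=
          setIntegral_Ioi_comp_mul_mul_le_of_le_rpow hT hgnn
            (integrableOn_Ioi_rpow_neg_mul (by positivity) hgi hgl)
            (fun τ hτ => hf0 τ hτ x hx y hy) hfb'
      _ = M * C₀ * t ^ (-(ℓ / (2 * α))) := by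
          rw [← rpow_mul ht.le]; ring_nf
      _ ≤ (M * C₀ + K + 1) * t ^ (-(ℓ / (2 * α))) := by gcongr; linarith
  · calc ∫ s in Ioi 0, f (t ^ (1 / α) * s) x y * g s
        ≤ K * (t ^ (1 / α)) ^ α / dist x y ^ (2 * (ℓ / 2 + α)) :=
          setIntegral_Ioi_comp_mul_mul_le_of_le_gaussian hM hT (dist_pos.mpr hxy) (by positivity)
            hgnn hgb (fun τ hτ => hf0 τ hτ x hx y hy) (fun τ hτ => hfb τ hτ x hx y hy)
      _ = K * t / dist x y ^ (ℓ + 2 * α) := by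
          rw [one_div, rpow_inv_rpow ht.le hα0.ne']; ring_nf
      _ ≤ (M * C₀ + K + 1) * t / dist x y ^ (ℓ + 2 * α) := by
          gcongr; linarith [mul_nonneg hM.le hC₀]

/-- Subordinated Gaussian bound: if `0 ≤ f(t,x,y) ≤ M t^{-ℓ/2} e^{-|x-y|²/(Mt)}` on a
domain `D ⊆ ℝ^d`, then `∫_0^∞ f(t^{1/α}s,x,y) g(α,s) ds ≤ c₁ min(t^{-ℓ/(2α)}, t/|x-y|^{ℓ+2α})`. -/
theorem subordinated_gaussian_bound {d : ℕ} (D : Set (EuclideanSpace ℝ (Fin d)))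
    (α ℓ M chat : ℝ) (hα : α ∈ Ioo (0 : ℝ) 1) (hℓ : 0 ≤ ℓ) (hM : 0 < M) (hchat : 0 < chat)
    (g : ℝ → ℝ) (hgm : Measurable g) (hgnn : ∀ s : ℝ, 0 < s → 0 ≤ g s)
    (hgi : IntegrableOn g (Ioi 0)) (hgint : (∫ s in Ioi (0 : ℝ), g s) = 1)
    (hgb : ∀ s : ℝ, 0 < s → g s ≤ chat * s ^ (-1 - α))
    (hgl : IntegrableOn (fun s : ℝ => s ^ (-(ℓ / 2)) * g s) (Ioc 0 1))
    (f : ℝ → EuclideanSpace ℝ (Fin d) → EuclideanSpace ℝ (Fin d) → ℝ)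
    (hf0 : ∀ t : ℝ, 0 < t → ∀ x ∈ D, ∀ y ∈ D, 0 ≤ f t x y)
    (hfb : ∀ t : ℝ, 0 < t → ∀ x ∈ D, ∀ y ∈ D,
      f t x y ≤ M * t ^ (-(ℓ / 2)) * Real.exp (-(dist x y) ^ 2 / (M * t))) :
    ∃ c₁ : ℝ, 0 < c₁ ∧ ∀ t : ℝ, 0 < t → ∀ x ∈ D, ∀ y ∈ D,
      (∫ s in Ioi (0 : ℝ), f (t ^ (1 / α) * s) x y * g s) ≤ c₁ * t ^ (-(ℓ / (2 * α))) ∧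
      (x ≠ y →
        (∫ s in Ioi (0 : ℝ), f (t ^ (1 / α) * s) x y * g s)
          ≤ c₁ * t / dist x y ^ (ℓ + 2 * α)) :=
  subordinated_gaussian_bound_general D α ℓ M chat hα hℓ hM hchat g hgnn hgi hgb hgl f hf0 hfb
end

section
/- Suppose |p(t,x,y) − p(t,x₁,y₁)| ≤ c t^{-(2d-γ)/2} (|x-x₁| ∨ |y-y₁|)^γ for all t > 0 and points in D, with γ ∈ (0,1). Then the subordinated kernels satisfy |q(t,x,y) − q(t,x₁,y₁)| ≤ c' t^{-(2d-γ)/(2α)} (|x-x₁| ∨ |y-y₁|)^γ for a constant c' depending on c, d, γ, α. -/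
/-! Subordination is an average over the time scales `t ^ (1/α) * s` against `g s ds`, so a
Hölder bound for `p` with time factor `r ^ β` integrates to the same Hölder bound for `q` with
factor `t ^ (β/α) * ∫ s ^ β g s ds`; the last integral is finite by the moment assumption on `g`. -/

open MeasureTheory Real Set

lemma abs_setIntegral_comp_mul_sub_le {f₁ f₂ g : ℝ → ℝ} {τ β K : ℝ} (hτ : 0 < τ)
    (hg : ∀ s, 0 < s → 0 ≤ g s) (hmom : IntegrableOn (fun s => s ^ β * g s) (Ioi 0))
    (h₁ : IntegrableOn (fun s => f₁ (τ * s) * g s) (Ioi 0))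
    (h₂ : IntegrableOn (fun s => f₂ (τ * s) * g s) (Ioi 0))
    (hf : ∀ r, 0 < r → |f₁ r - f₂ r| ≤ K * r ^ β) :
    |(∫ s in Ioi 0, f₁ (τ * s) * g s) - ∫ s in Ioi 0, f₂ (τ * s) * g s|
      ≤ K * τ ^ β * ∫ s in Ioi 0, s ^ β * g s := by
  rw [← integral_sub h₁ h₂, ← integral_const_mul, ← norm_eq_abs]
  refine norm_integral_le_of_norm_le (hmom.const_mul _) ?_
  filter_upwards [ae_restrict_mem measurableSet_Ioi] with s (hs : 0 < s)
  calc ‖f₁ (τ * s) * g s - f₂ (τ * s) * g s‖ = |f₁ (τ * s) - f₂ (τ * s)| * g s := by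
        rw [norm_eq_abs, ← sub_mul, abs_mul, abs_of_nonneg (hg s hs)]
    _ ≤ K * (τ * s) ^ β * g s := mul_le_mul_of_nonneg_right (hf _ (mul_pos hτ hs)) (hg s hs)
    _ = K * τ ^ β * (s ^ β * g s) := by rw [mul_rpow hτ.le hs.le]; ring

theorem subordinated_kernel_holder_general {d : ℕ} (D : Set (EuclideanSpace ℝ (Fin d)))
    (α γ c : ℝ) (hc : 0 < c)
    (g : ℝ → ℝ) (hgnn : ∀ s : ℝ, 0 < s → 0 ≤ g s)
    (hgmom : IntegrableOn (fun s : ℝ => s ^ (-((2 * (d : ℝ) - γ) / 2)) * g s) (Ioi 0))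
    (p : ℝ → EuclideanSpace ℝ (Fin d) → EuclideanSpace ℝ (Fin d) → ℝ)
    (hpi : ∀ t : ℝ, 0 < t → ∀ x ∈ D, ∀ y ∈ D,
      IntegrableOn (fun s : ℝ => p (t ^ (1 / α) * s) x y * g s) (Ioi 0))
    (hholder : ∀ t : ℝ, 0 < t → ∀ x ∈ D, ∀ y ∈ D, ∀ x₁ ∈ D, ∀ y₁ ∈ D,
      |p t x y - p t x₁ y₁|
        ≤ c * t ^ (-(2 * (d : ℝ) - γ) / 2) * max (dist x x₁) (dist y y₁) ^ γ) :
    ∃ c' : ℝ, 0 < c' ∧ ∀ t : ℝ, 0 < t → ∀ x ∈ D, ∀ y ∈ D, ∀ x₁ ∈ D, ∀ y₁ ∈ D,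
      |(∫ s in Ioi (0 : ℝ), p (t ^ (1 / α) * s) x y * g s) -
          (∫ s in Ioi (0 : ℝ), p (t ^ (1 / α) * s) x₁ y₁ * g s)|
        ≤ c' * t ^ (-((2 * (d : ℝ) - γ) / (2 * α))) * max (dist x x₁) (dist y y₁) ^ γ := by
  set a : ℝ := 2 * (d : ℝ) - γ
  set I : ℝ := ∫ s in Ioi 0, s ^ (-(a / 2)) * g s
  have hI : 0 ≤ I := setIntegral_nonneg measurableSet_Ioi fun s hs =>
    mul_nonneg (rpow_nonneg (le_of_lt hs) _) (hgnn s hs)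
  refine ⟨c * I + 1, by positivity, fun t ht x hx y hy x₁ hx₁ y₁ hy₁ => ?_⟩
  set M := max (dist x x₁) (dist y y₁) ^ γ
  have hM : 0 ≤ M := rpow_nonneg (le_max_of_le_left dist_nonneg) γ
  have hT : 0 ≤ t ^ (-(a / (2 * α))) := rpow_nonneg ht.le _
  have hsub := abs_setIntegral_comp_mul_sub_le (K := c * M) (rpow_pos_of_pos ht (1 / α)) hgnn
    hgmom (hpi t ht x hx y hy) (hpi t ht x₁ hx₁ y₁ hy₁) fun r hr => by
      simpa only [neg_div, mul_right_comm] using hholder r hr x hx y hy x₁ hx₁ y₁ hy₁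
  have hscale : (t ^ (1 / α)) ^ (-(a / 2)) = t ^ (-(a / (2 * α))) := by
    rw [← rpow_mul ht.le, one_div_mul_eq_div, neg_div, div_div]
  rw [hscale] at hsub
  calc _ ≤ c * M * t ^ (-(a / (2 * α))) * I := hsub
    _ ≤ _ := by nlinarith [mul_nonneg hT hM]

/-- Hölder continuity transfers to the subordinated kernel:
`|p(t,x,y)-p(t,x₁,y₁)| ≤ c t^{-(2d-γ)/2} (|x-x₁| ∨ |y-y₁|)^γ` implies
`|q(t,x,y)-q(t,x₁,y₁)| ≤ c' t^{-(2d-γ)/(2α)} (|x-x₁| ∨ |y-y₁|)^γ`. -/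
theorem subordinated_kernel_holder {d : ℕ} (D : Set (EuclideanSpace ℝ (Fin d)))
    (α γ c : ℝ) (hα : α ∈ Ioo (0 : ℝ) 1) (hγ : γ ∈ Ioo (0 : ℝ) 1) (hc : 0 < c)
    (g : ℝ → ℝ) (hgm : Measurable g) (hgnn : ∀ s : ℝ, 0 < s → 0 ≤ g s)
    (hgint : (∫ s in Ioi (0 : ℝ), g s) = 1)
    (hgmom : IntegrableOn (fun s : ℝ => s ^ (-((2 * (d : ℝ) - γ) / 2)) * g s) (Ioi 0))
    (p : ℝ → EuclideanSpace ℝ (Fin d) → EuclideanSpace ℝ (Fin d) → ℝ)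
    (hpm : ∀ x y, AEStronglyMeasurable (fun s : ℝ => p s x y) (volume.restrict (Ioi 0)))
    (hpi : ∀ t : ℝ, 0 < t → ∀ x ∈ D, ∀ y ∈ D,
      IntegrableOn (fun s : ℝ => p (t ^ (1 / α) * s) x y * g s) (Ioi 0))
    (hholder : ∀ t : ℝ, 0 < t → ∀ x ∈ D, ∀ y ∈ D, ∀ x₁ ∈ D, ∀ y₁ ∈ D,
      |p t x y - p t x₁ y₁|
        ≤ c * t ^ (-(2 * (d : ℝ) - γ) / 2) * max (dist x x₁) (dist y y₁) ^ γ) :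
    ∃ c' : ℝ, 0 < c' ∧ ∀ t : ℝ, 0 < t → ∀ x ∈ D, ∀ y ∈ D, ∀ x₁ ∈ D, ∀ y₁ ∈ D,
      |(∫ s in Ioi (0 : ℝ), p (t ^ (1 / α) * s) x y * g s) -
          (∫ s in Ioi (0 : ℝ), p (t ^ (1 / α) * s) x₁ y₁ * g s)|
        ≤ c' * t ^ (-((2 * (d : ℝ) - γ) / (2 * α))) * max (dist x x₁) (dist y y₁) ^ γ :=
  subordinated_kernel_holder_general D α γ c hc g hgnn hgmom p hpi hholder
end

section
/- Suppose ‖P_t − \tilde{P}_t‖_{p→p} ≤ c' (t^{-γ} + 1) ε for all t > 0, where γ ∈ (0,1) and ε ≥ 0. Then the subordinated semigroups satisfy ‖Q_t − \tilde{Q}_t‖_{p→p} ≤ ĉ (1 + t^{-γ/α}) ε for all t > 0, for a constant ĉ depending on c', γ, α. -/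
open MeasureTheory Real Set

/-!
Writing `c = t ^ (1 / α)`, the difference `Q t - Q̃ t` is the `g`-average of `P (c s) - P̃ (c s)`.
Bounding the integrand by `c' ε ((c s) ^ (-γ) + 1) ‖f‖` and integrating against `g` gives
`c' ε (c ^ (-γ) ∫ s ^ (-γ) g + 1) ‖f‖`, and `c ^ (-γ) = t ^ (-(γ / α))`; the negative moment of
`g` is finite, so it only enters the constant.
-/

theorem MeasureTheory.AEStronglyMeasurable.comp_const_mul_Ioi {β : Type*} [TopologicalSpace β]
    {F : ℝ → β} (hF : AEStronglyMeasurable F (volume.restrict (Ioi 0))) {c : ℝ} (hc : 0 < c) :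
    AEStronglyMeasurable (fun s ↦ F (c * s)) (volume.restrict (Ioi 0)) :=
  hF.comp_quasiMeasurePreserving
    ((Measure.quasiMeasurePreserving_smul volume hc.ne').restrict fun _ hs ↦ mul_pos hc hs)

section Average

variable {E : Type*} [NormedAddCommGroup E] [NormedSpace ℝ E]
  {α : Type*} [MeasurableSpace α] {μ : Measure α}

theorem MeasureTheory.Integrable.smul_apply_of_norm_le {g : α → ℝ} {P : α → E →L[ℝ] E} {C : ℝ}
    (hg : Integrable g μ) (hP : ∀ x, ‖P x‖ ≤ C) {f : E}
    (hPf : AEStronglyMeasurable (fun x ↦ P x f) μ) :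
    Integrable (fun x ↦ g x • P x f) μ :=
  hg.smul_bdd (C * ‖f‖) hPf (ae_of_all _ fun x ↦ (P x).le_of_opNorm_le (hP x) f)

theorem integral_smul_apply_sub_integral_smul_apply {g : α → ℝ} {P P' : α → E →L[ℝ] E} {C : ℝ}
    (hg : Integrable g μ) (hP : ∀ x, ‖P x‖ ≤ C) (hP' : ∀ x, ‖P' x‖ ≤ C) {f : E}
    (hPf : AEStronglyMeasurable (fun x ↦ P x f) μ)
    (hP'f : AEStronglyMeasurable (fun x ↦ P' x f) μ) :
    ∫ x, g x • P x f ∂μ - ∫ x, g x • P' x f ∂μ = ∫ x, g x • (P x - P' x) f ∂μ := by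
  rw [← integral_sub (hg.smul_apply_of_norm_le hP hPf) (hg.smul_apply_of_norm_le hP' hP'f)]
  simp only [sub_apply, smul_sub]

theorem norm_integral_smul_apply_le {g b : α → ℝ} {D : α → E →L[ℝ] E}
    (hg : ∀ᵐ x ∂μ, 0 ≤ g x) (hD : ∀ᵐ x ∂μ, ‖D x‖ ≤ b x)
    (hgb : Integrable (fun x ↦ g x * b x) μ) (f : E) :
    ‖∫ x, g x • D x f ∂μ‖ ≤ (∫ x, g x * b x ∂μ) * ‖f‖ := by
  rw [← integral_mul_const]
  refine norm_integral_le_of_norm_le (hgb.mul_const _) ?_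
  filter_upwards [hg, hD] with x hgx hDx
  rw [norm_smul, Real.norm_of_nonneg hgx, mul_assoc]
  exact mul_le_mul_of_nonneg_left ((D x).le_of_opNorm_le hDx f) hgx

end Average

theorem integrableOn_mul_rpow_const_mul_add_one {g : ℝ → ℝ} {r c : ℝ} (hc : 0 ≤ c)
    (hg : IntegrableOn g (Ioi 0)) (hgr : IntegrableOn (fun s ↦ s ^ r * g s) (Ioi 0)) :
    IntegrableOn (fun s ↦ g s * ((c * s) ^ r + 1)) (Ioi 0) ∧
      ∫ s in Ioi 0, g s * ((c * s) ^ r + 1) =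
        c ^ r * (∫ s in Ioi 0, s ^ r * g s) + ∫ s in Ioi 0, g s := by
  have hsplit : EqOn (fun s ↦ g s * ((c * s) ^ r + 1)) (fun s ↦ c ^ r * (s ^ r * g s) + g s)
      (Ioi 0) := fun s hs ↦ by
    simp only [mul_rpow hc (le_of_lt hs)]
    ring
  have hint : IntegrableOn (fun s ↦ c ^ r * (s ^ r * g s) + g s) (Ioi 0) :=
    (hgr.const_mul (c ^ r)).add hg
  refine ⟨hint.congr_fun hsplit.symm measurableSet_Ioi, ?_⟩
  rw [setIntegral_congr_fun measurableSet_Ioi hsplit, integral_add (hgr.const_mul _) hg,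
    integral_const_mul]

theorem subordinated_semigroup_stability_general {E : Type*} [NormedAddCommGroup E]
    [NormedSpace ℝ E] (α γ c' ε : ℝ)
    (hc' : 0 < c') (hε : 0 ≤ ε)
    (g : ℝ → ℝ) (hgnn : ∀ s : ℝ, 0 ≤ g s)
    (hgi : IntegrableOn g (Ioi 0)) (hgint : (∫ s in Ioi (0 : ℝ), g s) = 1)
    (hgmom : IntegrableOn (fun s : ℝ => s ^ (-γ) * g s) (Ioi 0))
    (P Pt : ℝ → E →L[ℝ] E)
    (hP : ∀ s : ℝ, ‖P s‖ ≤ 1) (hPt : ∀ s : ℝ, ‖Pt s‖ ≤ 1)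
    (hPm : ∀ f : E, AEStronglyMeasurable (fun s : ℝ => P s f) (volume.restrict (Ioi 0)))
    (hPtm : ∀ f : E, AEStronglyMeasurable (fun s : ℝ => Pt s f) (volume.restrict (Ioi 0)))
    (hstab : ∀ t : ℝ, 0 < t → ‖P t - Pt t‖ ≤ c' * (t ^ (-γ) + 1) * ε)
    (Q Qt : ℝ → E →L[ℝ] E)
    (hQ : ∀ t : ℝ, 0 < t → ∀ f : E,
      Q t f = ∫ s in Ioi (0 : ℝ), g s • P (t ^ (1 / α) * s) f)
    (hQt : ∀ t : ℝ, 0 < t → ∀ f : E,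
      Qt t f = ∫ s in Ioi (0 : ℝ), g s • Pt (t ^ (1 / α) * s) f) :
    ∃ chat : ℝ, 0 < chat ∧ ∀ t : ℝ, 0 < t →
      ‖Q t - Qt t‖ ≤ chat * (1 + t ^ (-(γ / α))) * ε := by
  set I := ∫ s in Ioi (0 : ℝ), s ^ (-γ) * g s
  have hI : 0 ≤ I := setIntegral_nonneg measurableSet_Ioi fun s hs ↦
    mul_nonneg (rpow_nonneg (le_of_lt hs) _) (hgnn s)
  refine ⟨c' * (I + 1), by positivity, fun t ht ↦ ?_⟩
  have hQc := hQ t ht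
  have hQtc := hQt t ht
  set c := t ^ (1 / α)
  have hc : 0 < c := rpow_pos_of_pos ht _
  have hcγ : c ^ (-γ) = t ^ (-(γ / α)) := by rw [← rpow_mul ht.le]; ring_nf
  have hT : 0 < t ^ (-(γ / α)) := rpow_pos_of_pos ht _
  obtain ⟨hint, hval⟩ := integrableOn_mul_rpow_const_mul_add_one hc.le hgi hgmom
  refine (Q t - Qt t).opNorm_le_bound (by positivity) fun f ↦ ?_
  have hdiff : (Q t - Qt t) f = ∫ s in Ioi (0 : ℝ), g s • (P (c * s) - Pt (c * s)) f := by
    rw [sub_apply, hQc, hQtc]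
    exact integral_smul_apply_sub_integral_smul_apply hgi (fun _ ↦ hP _) (fun _ ↦ hPt _)
      ((hPm f).comp_const_mul_Ioi hc) ((hPtm f).comp_const_mul_Ioi hc)
  have hbound : ∀ᵐ s ∂volume.restrict (Ioi 0),
      ‖P (c * s) - Pt (c * s)‖ ≤ c' * ε * ((c * s) ^ (-γ) + 1) :=
    ae_restrict_of_forall_mem measurableSet_Ioi fun s hs ↦
      (hstab _ (mul_pos hc hs)).trans_eq (by ring)
  have hweighted : IntegrableOn (fun s ↦ g s * (c' * ε * ((c * s) ^ (-γ) + 1))) (Ioi 0) := by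
    simpa only [IntegrableOn, mul_left_comm (g _)] using hint.const_mul (c' * ε)
  calc ‖(Q t - Qt t) f‖
      ≤ (∫ s in Ioi (0 : ℝ), g s * (c' * ε * ((c * s) ^ (-γ) + 1))) * ‖f‖ := by
        rw [hdiff]
        exact norm_integral_smul_apply_le (ae_of_all _ hgnn) hbound hweighted f
    _ = c' * ε * (t ^ (-(γ / α)) * I + 1) * ‖f‖ := by
        simp only [mul_left_comm (g _)]
        rw [integral_const_mul, hval, hgint, hcγ]
    _ ≤ c' * ε * ((I + 1) * (1 + t ^ (-(γ / α)))) * ‖f‖ := by gcongr; nlinarith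
    _ = c' * (I + 1) * (1 + t ^ (-(γ / α))) * ε * ‖f‖ := by ring

/-- Stability of subordinated semigroups: if `‖P_t − P̃_t‖ ≤ c'(t^{-γ}+1)ε` then the
subordinated semigroups satisfy `‖Q_t − Q̃_t‖ ≤ ĉ (1 + t^{-γ/α}) ε`. -/
theorem subordinated_semigroup_stability {E : Type*} [NormedAddCommGroup E]
    [NormedSpace ℝ E] (α γ c' ε : ℝ) (hα : α ∈ Ioo (0 : ℝ) 1) (hγ : γ ∈ Ioo (0 : ℝ) 1)
    (hc' : 0 < c') (hε : 0 ≤ ε)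
    (g : ℝ → ℝ) (hgm : Measurable g) (hgnn : ∀ s : ℝ, 0 ≤ g s)
    (hgi : IntegrableOn g (Ioi 0)) (hgint : (∫ s in Ioi (0 : ℝ), g s) = 1)
    (hgmom : IntegrableOn (fun s : ℝ => s ^ (-γ) * g s) (Ioi 0))
    (P Pt : ℝ → E →L[ℝ] E)
    (hP : ∀ s : ℝ, ‖P s‖ ≤ 1) (hPt : ∀ s : ℝ, ‖Pt s‖ ≤ 1)
    (hPm : ∀ f : E, AEStronglyMeasurable (fun s : ℝ => P s f) (volume.restrict (Ioi 0)))
    (hPtm : ∀ f : E, AEStronglyMeasurable (fun s : ℝ => Pt s f) (volume.restrict (Ioi 0)))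
    (hnm : Measurable (fun s : ℝ => ‖P s - Pt s‖))
    (hstab : ∀ t : ℝ, 0 < t → ‖P t - Pt t‖ ≤ c' * (t ^ (-γ) + 1) * ε)
    (Q Qt : ℝ → E →L[ℝ] E)
    (hQ : ∀ t : ℝ, 0 < t → ∀ f : E,
      Q t f = ∫ s in Ioi (0 : ℝ), g s • P (t ^ (1 / α) * s) f)
    (hQt : ∀ t : ℝ, 0 < t → ∀ f : E,
      Qt t f = ∫ s in Ioi (0 : ℝ), g s • Pt (t ^ (1 / α) * s) f) :
    ∃ chat : ℝ, 0 < chat ∧ ∀ t : ℝ, 0 < t →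
      ‖Q t - Qt t‖ ≤ chat * (1 + t ^ (-(γ / α))) * ε :=
  subordinated_semigroup_stability_general α γ c' ε hc' hε g hgnn hgi hgint hgmom P Pt hP hPt hPm
    hPtm hstab Q Qt hQ hQt
end

section
/- For constants M, A, ĉ > 0, α ∈ (0,1), ℓ ≥ 0, and for all t > 0, r ≥ 0: M t^{-ℓ/(2α)} ∫_0^∞ s^{-ℓ/2} exp(-r²/(M t^{1/α}s)) g(α,s) ds ≤ C min(t^{-ℓ/(2α)}, t · r^{-(ℓ+2α)}) where C depends only on M, ℓ, α, provided g(α,s) ≤ ĉ s^{-1-α} for all s > 0 and ∫_0^1 s^{-ℓ/2} g(α,s) ds < ∞ and ∫_0^∞ g(α,s) ds = 1. -/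
/-!
Split the integral at `s = 1`. Without any decay from the exponential, `exp ≤ 1` bounds the
integrand by `s^{-ℓ/2} g(s)` on `(0, 1]` and by `g(s)` on `(1, ∞)`, which gives the bound
`t^{-ℓ/(2α)}`. When `r > 0`, the tail bound `g(s) ≤ ĉ s^{-1-α}` instead dominates the integrand
by `ĉ s^{-(ℓ/2+α)-1} e^{-a/s}` with `a = r² / (M t^{1/α})`; the substitution `s ↦ 1/s` turns this
into a Gamma integral equal to `Γ(ℓ/2+α) a^{-(ℓ/2+α)}`, and the powers of `t` combine to `t`.
-/

open MeasureTheory Real Set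

lemma rpow_inv_substitution {p a x : ℝ} (hx : 0 < x) :
    x ^ ((-1 : ℝ) - 1) * ((x ^ (-1 : ℝ)) ^ (p - 1) * exp (-(a * x ^ (-1 : ℝ))))
      = x ^ (-p - 1) * exp (-(a / x)) := by
  rw [← rpow_mul hx.le, rpow_neg_one, ← mul_assoc, ← rpow_add hx,
    show (-1 : ℝ) - 1 + -1 * (p - 1) = -p - 1 by ring, ← div_eq_mul_inv]

lemma integrableOn_rpow_mul_exp_neg_div {p a : ℝ} (hp : 0 < p) (ha : 0 < a) :
    IntegrableOn (fun x : ℝ => x ^ (-p - 1) * exp (-(a / x))) (Ioi 0) := by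
  have hGamma : IntegrableOn (fun y : ℝ => y ^ (p - 1) * exp (-(a * y))) (Ioi 0) := by
    simpa only [rpow_one, neg_mul] using
      integrableOn_rpow_mul_exp_neg_mul_rpow (p := 1) (by linarith) one_pos ha
  exact ((integrableOn_Ioi_comp_rpow_iff' _ (p := -1) (by norm_num)).2 hGamma).congr_fun
    (fun x hx => rpow_inv_substitution hx) measurableSet_Ioi

lemma integral_rpow_mul_exp_neg_div {p a : ℝ} (hp : 0 < p) (ha : 0 < a) :
    ∫ x in Ioi (0 : ℝ), x ^ (-p - 1) * exp (-(a / x)) = (1 / a) ^ p * Gamma p := by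
  rw [← integral_rpow_mul_exp_neg_mul_Ioi hp ha,
    ← integral_comp_rpow_Ioi (fun y => y ^ (p - 1) * exp (-(a * y))) (p := -1) (by norm_num)]
  refine setIntegral_congr_fun measurableSet_Ioi (fun x hx => ?_)
  rw [smul_eq_mul, abs_neg, abs_one, one_mul]
  exact (rpow_inv_substitution hx).symm

section WeightedIntegral

variable {q : ℝ} {g φ : ℝ → ℝ}

lemma setIntegral_rpow_neg_mul_mul_le (hq : 0 ≤ q) (hg : ∀ s, 0 < s → 0 ≤ g s)
    (hφ : ∀ s, 0 < s → φ s ∈ Icc 0 1) (hgi : IntegrableOn g (Ioi 0))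
    (hgl : IntegrableOn (fun s => s ^ (-q) * g s) (Ioc 0 1)) :
    ∫ s in Ioi (0 : ℝ), s ^ (-q) * φ s * g s
      ≤ (∫ s in Ioc (0 : ℝ) 1, s ^ (-q) * g s) + ∫ s in Ioi (0 : ℝ), g s := by
  set h : ℝ → ℝ := fun s => (Ioc 0 1).indicator (fun s => s ^ (-q) * g s) s + g s
  have hind : Integrable ((Ioc 0 1).indicator fun s => s ^ (-q) * g s) :=
    (integrable_indicator_iff measurableSet_Ioc).2 hgl
  have hdom : ∀ s ∈ Ioi (0 : ℝ), s ^ (-q) * φ s * g s ≤ h s := by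
    intro s (hs : 0 < s)
    have hweight : s ^ (-q) * φ s ≤ s ^ (-q) := mul_le_of_le_one_right (by positivity) (hφ s hs).2
    by_cases hs1 : s ≤ 1
    · simp only [h, indicator_of_mem (show s ∈ Ioc 0 1 from ⟨hs, hs1⟩)]
      nlinarith [hg s hs]
    · have : s ^ (-q) ≤ 1 := rpow_le_one_of_one_le_of_nonpos (by linarith) (by linarith)
      simp only [h, indicator_of_notMem (show s ∉ Ioc 0 1 from fun h => hs1 h.2), zero_add]
      nlinarith [hg s hs]
  -- `integral_mono_of_nonneg` needs no measurability of the dominated integrand.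
  calc ∫ s in Ioi (0 : ℝ), s ^ (-q) * φ s * g s ≤ ∫ s in Ioi (0 : ℝ), h s :=
        integral_mono_of_nonneg
          (ae_restrict_of_forall_mem measurableSet_Ioi fun s (hs : 0 < s) =>
            mul_nonneg (mul_nonneg (by positivity) (hφ s hs).1) (hg s hs))
          (hind.integrableOn.add hgi) (ae_restrict_of_forall_mem measurableSet_Ioi hdom)
    _ = _ := by
        rw [integral_add hind.integrableOn hgi,
          setIntegral_indicator measurableSet_Ioc, inter_eq_right.2 Ioc_subset_Ioi_self]

lemma setIntegral_rpow_neg_mul_exp_neg_div_le {α c a : ℝ} (hqα : 0 < q + α) (ha : 0 < a)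
    (hg : ∀ s, 0 < s → 0 ≤ g s) (hgb : ∀ s, 0 < s → g s ≤ c * s ^ (-1 - α)) :
    ∫ s in Ioi (0 : ℝ), s ^ (-q) * exp (-(a / s)) * g s
      ≤ c * ((1 / a) ^ (q + α) * Gamma (q + α)) := by
  have hdom : ∀ s ∈ Ioi (0 : ℝ),
      s ^ (-q) * exp (-(a / s)) * g s ≤ c * (s ^ (-(q + α) - 1) * exp (-(a / s))) := by
    intro s (hs : 0 < s)
    calc s ^ (-q) * exp (-(a / s)) * g s ≤ s ^ (-q) * exp (-(a / s)) * (c * s ^ (-1 - α)) :=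
          mul_le_mul_of_nonneg_left (hgb s hs) (by positivity)
      _ = c * (s ^ (-q) * s ^ (-1 - α) * exp (-(a / s))) := by ring
      _ = c * (s ^ (-(q + α) - 1) * exp (-(a / s))) := by
          rw [← rpow_add hs, show -q + (-1 - α) = -(q + α) - 1 by ring]
  calc ∫ s in Ioi (0 : ℝ), s ^ (-q) * exp (-(a / s)) * g s
      ≤ ∫ s in Ioi (0 : ℝ), c * (s ^ (-(q + α) - 1) * exp (-(a / s))) :=
        integral_mono_of_nonneg
          (ae_restrict_of_forall_mem measurableSet_Ioi fun s (hs : 0 < s) =>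
            mul_nonneg (by positivity) (hg s hs))
          ((integrableOn_rpow_mul_exp_neg_div hqα ha).const_mul c)
          (ae_restrict_of_forall_mem measurableSet_Ioi hdom)
    _ = c * ((1 / a) ^ (q + α) * Gamma (q + α)) := by
        rw [integral_const_mul, integral_rpow_mul_exp_neg_div hqα ha]

end WeightedIntegral

lemma rpow_neg_div_mul_rpow_div_sq {α ℓ M t r : ℝ} (hα : 0 < α) (hM : 0 < M) (ht : 0 < t)
    (hr : 0 < r) :
    t ^ (-(ℓ / (2 * α))) * (M * t ^ (1 / α) / r ^ 2) ^ (ℓ / 2 + α)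
      = M ^ (ℓ / 2 + α) * t * r ^ (-(ℓ + 2 * α)) := by
  have ht_exp : t ^ (-(ℓ / (2 * α))) * t ^ (1 / α * (ℓ / 2 + α)) = t := by
    rw [← rpow_add ht, show -(ℓ / (2 * α)) + 1 / α * (ℓ / 2 + α) = 1 by field_simp; ring,
      rpow_one]
  have hr_exp : (r ^ 2) ^ (ℓ / 2 + α) = r ^ (ℓ + 2 * α) := by
    rw [← rpow_natCast r 2, ← rpow_mul hr.le]
    congr 1
    push_cast
    ring
  rw [div_rpow (by positivity) (sq_nonneg r), mul_rpow hM.le (by positivity), ← rpow_mul ht.le,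
    hr_exp, rpow_neg hr.le]
  linear_combination (M ^ (ℓ / 2 + α) / r ^ (ℓ + 2 * α)) * ht_exp

theorem subordinated_key_estimate_general (α ℓ M chat : ℝ) (hα : α ∈ Ioo (0 : ℝ) 1)
    (hℓ : 0 ≤ ℓ) (hM : 0 < M)
    (g : ℝ → ℝ) (hgnn : ∀ s : ℝ, 0 < s → 0 ≤ g s)
    (hgb : ∀ s : ℝ, 0 < s → g s ≤ chat * s ^ (-1 - α))
    (hgl : IntegrableOn (fun s : ℝ => s ^ (-(ℓ / 2)) * g s) (Ioc 0 1))
    (hgint : (∫ s in Ioi (0 : ℝ), g s) = 1) :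
    ∃ C : ℝ, 0 < C ∧ ∀ t : ℝ, 0 < t → ∀ r : ℝ, 0 ≤ r →
      (M * t ^ (-(ℓ / (2 * α))) *
        ∫ s in Ioi (0 : ℝ),
          s ^ (-(ℓ / 2)) * Real.exp (-(r ^ 2) / (M * t ^ (1 / α) * s)) * g s)
        ≤ C * t ^ (-(ℓ / (2 * α))) ∧
      (0 < r →
        (M * t ^ (-(ℓ / (2 * α))) *
          ∫ s in Ioi (0 : ℝ),
            s ^ (-(ℓ / 2)) * Real.exp (-(r ^ 2) / (M * t ^ (1 / α) * s)) * g s)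
          ≤ C * t * r ^ (-(ℓ + 2 * α))) := by
  have hα0 : 0 < α := hα.1
  have hgi : IntegrableOn g (Ioi 0) := Integrable.of_integral_ne_zero (by rw [hgint]; norm_num)
  set I := ∫ s in Ioc (0 : ℝ) 1, s ^ (-(ℓ / 2)) * g s
  have hI : 0 ≤ I := setIntegral_nonneg measurableSet_Ioc fun s hs =>
    mul_nonneg (rpow_nonneg hs.1.le _) (hgnn s hs.1)
  set p := ℓ / 2 + α
  refine ⟨max (M * (I + 1)) (M * chat * Gamma p * M ^ p), lt_max_of_lt_left (by positivity),
    fun t ht r hr => ⟨?_, fun hr0 => ?_⟩⟩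
  · have hexp : ∀ s, 0 < s → exp (-(r ^ 2) / (M * t ^ (1 / α) * s)) ∈ Icc 0 1 := fun s hs =>
      ⟨(exp_pos _).le, exp_le_one_iff.2 (div_nonpos_of_nonpos_of_nonneg (by nlinarith)
        (by positivity))⟩
    calc _ ≤ M * t ^ (-(ℓ / (2 * α))) * (I + 1) := by
          gcongr
          simpa only [hgint] using
            setIntegral_rpow_neg_mul_mul_le (by linarith) hgnn hexp hgi hgl
      _ ≤ _ := by
          rw [mul_right_comm]
          exact mul_le_mul_of_nonneg_right (le_max_left _ _) (by positivity)
  · have hexp (s : ℝ) :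
        -(r ^ 2) / (M * t ^ (1 / α) * s) = -(r ^ 2 / (M * t ^ (1 / α)) / s) := by
      rw [div_div, neg_div]
    simp_rw [hexp]
    calc _ ≤ M * t ^ (-(ℓ / (2 * α))) *
          (chat * ((1 / (r ^ 2 / (M * t ^ (1 / α)))) ^ p * Gamma p)) := by
          gcongr
          exact setIntegral_rpow_neg_mul_exp_neg_div_le (by positivity) (by positivity) hgnn hgb
      _ = M * chat * Gamma p * (t ^ (-(ℓ / (2 * α))) * (M * t ^ (1 / α) / r ^ 2) ^ p) := by
          rw [one_div_div]; ring
      _ = M * chat * Gamma p * M ^ p * t * r ^ (-(ℓ + 2 * α)) := by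
          rw [rpow_neg_div_mul_rpow_div_sq hα0 hM ht hr0]; ring
      _ ≤ _ := by gcongr; exact le_max_right _ _

/-- The key quantitative estimate for the subordinated gradient bound:
`M t^{-ℓ/(2α)} ∫_0^∞ s^{-ℓ/2} e^{-r²/(M t^{1/α} s)} g(α,s) ds
  ≤ C min(t^{-ℓ/(2α)}, t r^{-(ℓ+2α)})`. -/
theorem subordinated_key_estimate (α ℓ M chat : ℝ) (hα : α ∈ Ioo (0 : ℝ) 1)
    (hℓ : 0 ≤ ℓ) (hM : 0 < M) (hchat : 0 < chat)
    (g : ℝ → ℝ) (hgm : Measurable g) (hgnn : ∀ s : ℝ, 0 < s → 0 ≤ g s)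
    (hgb : ∀ s : ℝ, 0 < s → g s ≤ chat * s ^ (-1 - α))
    (hgl : IntegrableOn (fun s : ℝ => s ^ (-(ℓ / 2)) * g s) (Ioc 0 1))
    (hgint : (∫ s in Ioi (0 : ℝ), g s) = 1) :
    ∃ C : ℝ, 0 < C ∧ ∀ t : ℝ, 0 < t → ∀ r : ℝ, 0 ≤ r →
      (M * t ^ (-(ℓ / (2 * α))) *
        ∫ s in Ioi (0 : ℝ),
          s ^ (-(ℓ / 2)) * Real.exp (-(r ^ 2) / (M * t ^ (1 / α) * s)) * g s)
        ≤ C * t ^ (-(ℓ / (2 * α))) ∧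
      (0 < r →
        (M * t ^ (-(ℓ / (2 * α))) *
          ∫ s in Ioi (0 : ℝ),
            s ^ (-(ℓ / 2)) * Real.exp (-(r ^ 2) / (M * t ^ (1 / α) * s)) * g s)
          ≤ C * t * r ^ (-(ℓ + 2 * α))) :=
  subordinated_key_estimate_general α ℓ M chat hα hℓ hM g hgnn hgb hgl hgint
end

section
/- Suppose |p(t,x,y) − \tilde p(t,x,y)| ≤ c' t^{-d/2} exp(-|x-y|²/(ct)) (t^{-γ} + 1) ε for all t > 0 and x,y ∈ ℝ^d, with γ ∈ (0,1) and ε ≥ 0. Then the subordinated kernels satisfy |q(t,x,y) − \tilde q(t,x,y)| ≤ C ε [ min(t^{-d/(2α)}, t/|x-y|^{d+2α}) + min(t^{-(d+2γ)/(2α)}, t/|x-y|^{d+2γ+2α}) ] for a constant C depending on c, c', d, γ, α. -/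
/-!
Write `E_ℓ(u) = u^{-ℓ/2} e^{-r²/(cu)}`. The hypothesis bounds `|p - p̃|(u)` by
`c' ε (E_d(u) + E_{d+2γ}(u))`, so it suffices to bound each subordinated envelope
`∫₀^∞ E_ℓ(t^{1/α} s) g(s) ds`. Dropping the exponential and using the negative moments of `g`
gives `≲ t^{-ℓ/(2α)}`. Off the diagonal, the tail bound `g(s) ≤ ĉ s^{-1-α}` turns it into
`ĉ t^{1+1/α} ∫₀^∞ E_{ℓ+2+2α}(t^{1/α} s) ds`, and the substitution `u = 1/x` evaluates the time
integral of an envelope as a Gamma value: `∫₀^∞ E_ℓ = (c/r²)^{ℓ/2-1} Γ(ℓ/2-1)`, giving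
`≲ t / r^{ℓ+2α}`.
-/

open MeasureTheory Real Set

noncomputable def gaussianEnvelope (ℓ c r u : ℝ) : ℝ :=
  u ^ (-ℓ / 2) * exp (-r ^ 2 / (c * u))

section GaussianEnvelope

variable {ℓ c r u : ℝ}

theorem gaussianEnvelope_nonneg (hu : 0 ≤ u) : 0 ≤ gaussianEnvelope ℓ c r u := by
  unfold gaussianEnvelope
  positivity

theorem gaussianEnvelope_le_rpow (hc : 0 ≤ c) (hu : 0 ≤ u) :
    gaussianEnvelope ℓ c r u ≤ u ^ (-ℓ / 2) := by
  refine mul_le_of_le_one_right (by positivity) (exp_le_one_iff.2 ?_)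
  rw [neg_div]
  exact neg_nonpos.2 (by positivity)

theorem gaussianEnvelope_mul_rpow_neg (κ : ℝ) (hu : 0 < u) :
    gaussianEnvelope ℓ c r u * u ^ (-κ) = gaussianEnvelope (ℓ + 2 * κ) c r u := by
  unfold gaussianEnvelope
  rw [mul_right_comm, ← rpow_add hu]
  ring_nf

theorem measurable_gaussianEnvelope : Measurable (gaussianEnvelope ℓ c r) := by
  unfold gaussianEnvelope
  fun_prop

/-- The integrand of `integral_comp_rpow_Ioi` for `p = -1`: the substitution `u = x⁻¹` turns the
envelope into a Gamma integrand. -/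
theorem gaussianEnvelope_comp_inv {x : ℝ} (hx : 0 < x) :
    (|(-1 : ℝ)| * x ^ ((-1 : ℝ) - 1)) • gaussianEnvelope ℓ c r (x ^ (-1 : ℝ)) =
      x ^ (ℓ / 2 - 1 - 1) * exp (-(r ^ 2 / c * x)) := by
  unfold gaussianEnvelope
  rw [rpow_neg_one, inv_rpow hx.le, ← rpow_neg hx.le, smul_eq_mul, abs_neg, abs_one, one_mul,
    ← mul_assoc, ← rpow_add hx]
  congr 2
  · ring
  · field_simp

theorem integrableOn_gaussianEnvelope (hc : 0 < c) (hr : 0 < r) (hℓ : 2 < ℓ) :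
    IntegrableOn (gaussianEnvelope ℓ c r) (Ioi 0) := by
  rw [← integrableOn_Ioi_comp_rpow_iff _ (by norm_num : (-1 : ℝ) ≠ 0),
    integrableOn_congr_fun (fun _ hx => gaussianEnvelope_comp_inv (mem_Ioi.1 hx))
      measurableSet_Ioi]
  simpa [neg_mul] using integrableOn_rpow_mul_exp_neg_mul_rpow (p := 1) (s := ℓ / 2 - 1 - 1)
    (by linarith) one_pos (by positivity : 0 < r ^ 2 / c)

theorem integral_gaussianEnvelope (hc : 0 < c) (hr : 0 < r) (hℓ : 2 < ℓ) :
    ∫ u in Ioi 0, gaussianEnvelope ℓ c r u = (c / r ^ 2) ^ (ℓ / 2 - 1) * Gamma (ℓ / 2 - 1) := by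
  rw [← integral_comp_rpow_Ioi _ (by norm_num : (-1 : ℝ) ≠ 0),
    setIntegral_congr_fun measurableSet_Ioi (fun x hx => gaussianEnvelope_comp_inv hx),
    integral_rpow_mul_exp_neg_mul_Ioi (by linarith) (by positivity), one_div_div]

end GaussianEnvelope

structure StableDensityBounds (α ĉ : ℝ) (g : ℝ → ℝ) : Prop where
  measurable : Measurable g
  nonneg : ∀ s : ℝ, 0 < s → 0 ≤ g s
  le_rpow : ∀ s : ℝ, 0 < s → g s ≤ ĉ * s ^ (-1 - α)
  integrableOn_Ioc : ∀ m : ℝ, 0 ≤ m → IntegrableOn (fun s : ℝ => s ^ (-m) * g s) (Ioc 0 1)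

namespace StableDensityBounds

variable {α ĉ ℓ c τ : ℝ} {g : ℝ → ℝ}

theorem integrableOn_rpow_neg_mul (hg : StableDensityBounds α ĉ g) (hα : 0 < α) {a : ℝ}
    (ha : 0 ≤ a) : IntegrableOn (fun s => s ^ (-a) * g s) (Ioi 0) := by
  rw [← Ioc_union_Ioi_eq_Ioi zero_le_one, integrableOn_union]
  refine ⟨hg.integrableOn_Ioc a ha, ?_⟩
  have htail : IntegrableOn (fun s : ℝ => ĉ * s ^ (-a - 1 - α)) (Ioi 1) :=
    (integrableOn_Ioi_rpow_of_lt (by linarith) zero_lt_one).const_mul ĉ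
  refine htail.mono' ((measurable_id.pow_const _).mul hg.measurable).aestronglyMeasurable ?_
  filter_upwards [ae_restrict_mem measurableSet_Ioi] with s (hs : 1 < s)
  have hs0 : 0 < s := by linarith
  rw [norm_of_nonneg (mul_nonneg (by positivity) (hg.nonneg s hs0))]
  calc s ^ (-a) * g s ≤ s ^ (-a) * (ĉ * s ^ (-1 - α)) := by gcongr; exact hg.le_rpow s hs0
    _ = ĉ * s ^ (-a - 1 - α) := by rw [mul_left_comm, ← rpow_add hs0]; ring_nf

theorem gaussianEnvelope_mul_le (hg : StableDensityBounds α ĉ g) (hc : 0 ≤ c) (hτ : 0 < τ)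
    (r : ℝ) {s : ℝ} (hs : 0 < s) :
    gaussianEnvelope ℓ c r (τ * s) * g s ≤ τ ^ (-ℓ / 2) * (s ^ (-ℓ / 2) * g s) := by
  calc gaussianEnvelope ℓ c r (τ * s) * g s ≤ (τ * s) ^ (-ℓ / 2) * g s :=
        mul_le_mul_of_nonneg_right (gaussianEnvelope_le_rpow hc (by positivity)) (hg.nonneg s hs)
    _ = τ ^ (-ℓ / 2) * (s ^ (-ℓ / 2) * g s) := by rw [mul_rpow hτ.le hs.le, mul_assoc]

theorem integrableOn_rpow_neg_div_two_mul (hg : StableDensityBounds α ĉ g) (hα : 0 < α)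
    (hℓ : 0 ≤ ℓ) : IntegrableOn (fun s => s ^ (-ℓ / 2) * g s) (Ioi 0) := by
  simpa only [neg_div] using hg.integrableOn_rpow_neg_mul hα (a := ℓ / 2) (by positivity)

theorem integrableOn_gaussianEnvelope_mul (hg : StableDensityBounds α ĉ g) (hα : 0 < α)
    (hc : 0 ≤ c) (hℓ : 0 ≤ ℓ) (hτ : 0 < τ) (r : ℝ) :
    IntegrableOn (fun s => gaussianEnvelope ℓ c r (τ * s) * g s) (Ioi 0) := by
  refine ((hg.integrableOn_rpow_neg_div_two_mul hα hℓ).const_mul (τ ^ (-ℓ / 2))).mono'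
    ((measurable_gaussianEnvelope.comp (measurable_const_mul τ)).mul
      hg.measurable).aestronglyMeasurable ?_
  filter_upwards [ae_restrict_mem measurableSet_Ioi] with s (hs : 0 < s)
  rw [norm_of_nonneg (mul_nonneg (gaussianEnvelope_nonneg (by positivity)) (hg.nonneg s hs))]
  exact hg.gaussianEnvelope_mul_le hc hτ r hs

theorem setIntegral_gaussianEnvelope_mul_le_rpow (hg : StableDensityBounds α ĉ g)
    (hα : 0 < α) (hc : 0 ≤ c) (hℓ : 0 ≤ ℓ) (hτ : 0 < τ) (r : ℝ) :
    ∫ s in Ioi 0, gaussianEnvelope ℓ c r (τ * s) * g s ≤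
      τ ^ (-ℓ / 2) * ∫ s in Ioi 0, s ^ (-ℓ / 2) * g s := by
  rw [← integral_const_mul]
  exact setIntegral_mono_on (hg.integrableOn_gaussianEnvelope_mul hα hc hℓ hτ r)
    ((hg.integrableOn_rpow_neg_div_two_mul hα hℓ).const_mul _) measurableSet_Ioi
    fun s hs => hg.gaussianEnvelope_mul_le hc hτ r hs

theorem setIntegral_gaussianEnvelope_mul_le_div (hg : StableDensityBounds α ĉ g) (hα : 0 < α)
    (hc : 0 < c) (hℓ : 0 ≤ ℓ) (hτ : 0 < τ) {r : ℝ} (hr : 0 < r) :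
    ∫ s in Ioi 0, gaussianEnvelope ℓ c r (τ * s) * g s ≤
      ĉ * c ^ (ℓ / 2 + α) * Gamma (ℓ / 2 + α) * (τ ^ α / r ^ (ℓ + 2 * α)) := by
  set ℓ' := ℓ + 2 * (1 + α)
  have hmajor : ∀ s ∈ Ioi (0 : ℝ), gaussianEnvelope ℓ c r (τ * s) * g s ≤
      ĉ * τ ^ (1 + α) * gaussianEnvelope ℓ' c r (τ * s) := by
    intro s (hs : 0 < s)
    have hrescale : s ^ (-1 - α) = τ ^ (1 + α) * (τ * s) ^ (-(1 + α)) := by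
      rw [mul_rpow hτ.le hs.le, rpow_neg hτ.le, ← mul_assoc, mul_inv_cancel₀ (by positivity),
        one_mul]
      ring_nf
    calc gaussianEnvelope ℓ c r (τ * s) * g s
        ≤ gaussianEnvelope ℓ c r (τ * s) * (ĉ * s ^ (-1 - α)) :=
          mul_le_mul_of_nonneg_left (hg.le_rpow s hs) (gaussianEnvelope_nonneg (by positivity))
      _ = ĉ * τ ^ (1 + α) * (gaussianEnvelope ℓ c r (τ * s) * (τ * s) ^ (-(1 + α))) := by
          rw [hrescale]; ring
      _ = ĉ * τ ^ (1 + α) * gaussianEnvelope ℓ' c r (τ * s) := by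
          rw [gaussianEnvelope_mul_rpow_neg _ (by positivity)]
  have hℓ' : ℓ' / 2 - 1 = ℓ / 2 + α := by ring
  have hint : IntegrableOn (fun s => gaussianEnvelope ℓ' c r (τ * s)) (Ioi 0) := by
    rw [integrableOn_Ioi_comp_mul_left_iff _ _ hτ, mul_zero]
    exact integrableOn_gaussianEnvelope hc hr (by linarith)
  have hval : ∫ s in Ioi 0, gaussianEnvelope ℓ' c r (τ * s) =
      τ⁻¹ * ((c / r ^ 2) ^ (ℓ / 2 + α) * Gamma (ℓ / 2 + α)) := by
    rw [integral_comp_mul_left_Ioi _ _ hτ, mul_zero,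
      integral_gaussianEnvelope hc hr (by linarith), hℓ', smul_eq_mul]
  have hpow : (c / r ^ 2) ^ (ℓ / 2 + α) = c ^ (ℓ / 2 + α) / r ^ (ℓ + 2 * α) := by
    rw [div_rpow hc.le (by positivity), ← rpow_natCast, ← rpow_mul hr.le]
    ring_nf
  calc ∫ s in Ioi 0, gaussianEnvelope ℓ c r (τ * s) * g s
      ≤ ∫ s in Ioi 0, ĉ * τ ^ (1 + α) * gaussianEnvelope ℓ' c r (τ * s) :=
        setIntegral_mono_on (hg.integrableOn_gaussianEnvelope_mul hα hc.le hℓ hτ r)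
          (hint.const_mul _) measurableSet_Ioi hmajor
    _ = ĉ * c ^ (ℓ / 2 + α) * Gamma (ℓ / 2 + α) * (τ ^ (1 + α) * τ⁻¹ / r ^ (ℓ + 2 * α)) := by
        rw [integral_const_mul, hval, hpow]; ring
    _ = ĉ * c ^ (ℓ / 2 + α) * Gamma (ℓ / 2 + α) * (τ ^ α / r ^ (ℓ + 2 * α)) := by
        rw [rpow_add hτ, rpow_one]
        field_simp

end StableDensityBounds

namespace StableDensityBounds

variable {α ĉ ℓ c : ℝ} {g : ℝ → ℝ}

theorem exists_setIntegral_gaussianEnvelope_mul_le (hg : StableDensityBounds α ĉ g)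
    (hα : 0 < α) (hĉ : 0 < ĉ) (hc : 0 < c) (hℓ : 0 ≤ ℓ) :
    ∃ K : ℝ, 0 < K ∧ ∀ t : ℝ, 0 < t → ∀ r : ℝ,
      (∫ s in Ioi 0, gaussianEnvelope ℓ c r (t ^ (1 / α) * s) * g s) ≤ K * t ^ (-ℓ / (2 * α)) ∧
      (0 < r → (∫ s in Ioi 0, gaussianEnvelope ℓ c r (t ^ (1 / α) * s) * g s) ≤
        K * min (t ^ (-ℓ / (2 * α))) (t / r ^ (ℓ + 2 * α))) := by
  set M := ∫ s in Ioi 0, s ^ (-ℓ / 2) * g s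
  set A := ĉ * c ^ (ℓ / 2 + α) * Gamma (ℓ / 2 + α)
  have hM : 0 ≤ M := setIntegral_nonneg measurableSet_Ioi fun s (hs : 0 < s) =>
    mul_nonneg (by positivity) (hg.nonneg s hs)
  have hA : 0 < A := by positivity
  refine ⟨M + A, by positivity, fun t ht r => ?_⟩
  have hτ : 0 < t ^ (1 / α) := by positivity
  have hτℓ : (t ^ (1 / α)) ^ (-ℓ / 2) = t ^ (-ℓ / (2 * α)) := by
    rw [← rpow_mul ht.le]; ring_nf
  have hτα : (t ^ (1 / α)) ^ α = t := by
    rw [← rpow_mul ht.le, one_div_mul_cancel hα.ne', rpow_one]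
  have hdiag : (∫ s in Ioi 0, gaussianEnvelope ℓ c r (t ^ (1 / α) * s) * g s) ≤
      (M + A) * t ^ (-ℓ / (2 * α)) := by
    refine (hg.setIntegral_gaussianEnvelope_mul_le_rpow hα hc.le hℓ hτ r).trans ?_
    rw [hτℓ, mul_comm]
    gcongr
    linarith
  refine ⟨hdiag, fun hr => ?_⟩
  rw [mul_min_of_nonneg _ _ (by positivity)]
  refine le_min hdiag ((hg.setIntegral_gaussianEnvelope_mul_le_div hα hc hℓ hτ hr).trans ?_)
  rw [hτα]
  gcongr
  linarith

theorem abs_setIntegral_sub_le (hg : StableDensityBounds α ĉ g) (hα : 0 < α) (hc : 0 < c)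
    (hℓ : 0 ≤ ℓ) {γ c' ε τ r : ℝ} (hγ : 0 ≤ γ) (hτ : 0 < τ) {f₁ f₂ : ℝ → ℝ}
    (hf₁ : IntegrableOn (fun s => f₁ (τ * s) * g s) (Ioi 0))
    (hf₂ : IntegrableOn (fun s => f₂ (τ * s) * g s) (Ioi 0))
    (hf : ∀ u, 0 < u →
      |f₁ u - f₂ u| ≤ c' * u ^ (-ℓ / 2) * exp (-r ^ 2 / (c * u)) * (u ^ (-γ) + 1) * ε) :
    |(∫ s in Ioi 0, f₁ (τ * s) * g s) - ∫ s in Ioi 0, f₂ (τ * s) * g s| ≤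
      c' * ε * ((∫ s in Ioi 0, gaussianEnvelope ℓ c r (τ * s) * g s) +
        ∫ s in Ioi 0, gaussianEnvelope (ℓ + 2 * γ) c r (τ * s) * g s) := by
  have hE₁ := hg.integrableOn_gaussianEnvelope_mul hα hc.le hℓ hτ r
  have hE₂ := hg.integrableOn_gaussianEnvelope_mul (ℓ := ℓ + 2 * γ) hα hc.le (by positivity) hτ r
  rw [← integral_sub hf₁ hf₂, ← integral_add hE₁ hE₂, ← integral_const_mul, ← Real.norm_eq_abs]
  refine norm_integral_le_of_norm_le ((hE₁.add hE₂).const_mul _)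
    ((ae_restrict_iff' measurableSet_Ioi).2 (Filter.Eventually.of_forall fun s (hs : 0 < s) => ?_))
  have hu : 0 < τ * s := by positivity
  rw [Real.norm_eq_abs, ← sub_mul, abs_mul, abs_of_nonneg (hg.nonneg s hs)]
  calc |f₁ (τ * s) - f₂ (τ * s)| * g s
      ≤ c' * (τ * s) ^ (-ℓ / 2) * exp (-r ^ 2 / (c * (τ * s))) * ((τ * s) ^ (-γ) + 1) * ε * g s :=
        mul_le_mul_of_nonneg_right (hf _ hu) (hg.nonneg s hs)
    _ = c' * ε * (gaussianEnvelope ℓ c r (τ * s) * g s +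
          gaussianEnvelope (ℓ + 2 * γ) c r (τ * s) * g s) := by
        rw [← gaussianEnvelope_mul_rpow_neg γ hu]
        unfold gaussianEnvelope
        ring

end StableDensityBounds

theorem subordinated_kernel_stability_general {d : ℕ}
    (α γ c c' ε chat : ℝ) (hα : α ∈ Ioo (0 : ℝ) 1) (hγ : γ ∈ Ioo (0 : ℝ) 1)
    (hc : 0 < c) (hc' : 0 < c') (hε : 0 ≤ ε) (hchat : 0 < chat)
    (g : ℝ → ℝ) (hgm : Measurable g) (hgnn : ∀ s : ℝ, 0 < s → 0 ≤ g s)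
    (hgb : ∀ s : ℝ, 0 < s → g s ≤ chat * s ^ (-1 - α))
    (hgl : ∀ m : ℝ, 0 ≤ m → IntegrableOn (fun s : ℝ => s ^ (-m) * g s) (Ioc 0 1))
    (p pt : ℝ → EuclideanSpace ℝ (Fin d) → EuclideanSpace ℝ (Fin d) → ℝ)
    (hpi : ∀ t : ℝ, 0 < t → ∀ x y : EuclideanSpace ℝ (Fin d),
      IntegrableOn (fun s : ℝ => p (t ^ (1 / α) * s) x y * g s) (Ioi 0) ∧
      IntegrableOn (fun s : ℝ => pt (t ^ (1 / α) * s) x y * g s) (Ioi 0))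
    (hstab : ∀ t : ℝ, 0 < t → ∀ x y : EuclideanSpace ℝ (Fin d),
      |p t x y - pt t x y|
        ≤ c' * t ^ (-(d : ℝ) / 2) * Real.exp (-(dist x y) ^ 2 / (c * t)) *
            (t ^ (-γ) + 1) * ε) :
    ∃ C : ℝ, 0 < C ∧ ∀ t : ℝ, 0 < t → ∀ x y : EuclideanSpace ℝ (Fin d),
      |(∫ s in Ioi (0 : ℝ), p (t ^ (1 / α) * s) x y * g s) -
          (∫ s in Ioi (0 : ℝ), pt (t ^ (1 / α) * s) x y * g s)|
        ≤ C * ε * (t ^ (-(d : ℝ) / (2 * α)) + t ^ (-((d : ℝ) + 2 * γ) / (2 * α))) ∧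
      (x ≠ y →
        |(∫ s in Ioi (0 : ℝ), p (t ^ (1 / α) * s) x y * g s) -
            (∫ s in Ioi (0 : ℝ), pt (t ^ (1 / α) * s) x y * g s)|
          ≤ C * ε *
              (min (t ^ (-(d : ℝ) / (2 * α))) (t / dist x y ^ ((d : ℝ) + 2 * α)) +
                min (t ^ (-((d : ℝ) + 2 * γ) / (2 * α)))
                  (t / dist x y ^ ((d : ℝ) + 2 * γ + 2 * α)))) := by
  have hg : StableDensityBounds α chat g := ⟨hgm, hgnn, hgb, hgl⟩
  have hd : (0 : ℝ) ≤ d := d.cast_nonneg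
  obtain ⟨K₁, hK₁, hI₁⟩ := hg.exists_setIntegral_gaussianEnvelope_mul_le hα.1 hchat hc hd
  obtain ⟨K₂, hK₂, hI₂⟩ := hg.exists_setIntegral_gaussianEnvelope_mul_le (ℓ := d + 2 * γ) hα.1
    hchat hc (by linarith [hγ.1])
  refine ⟨c' * (K₁ + K₂), by positivity, fun t ht x y => ?_⟩
  have hdiff := hg.abs_setIntegral_sub_le hα.1 hc hd hγ.1.le (by positivity : 0 < t ^ (1 / α))
    (hpi t ht x y).1 (hpi t ht x y).2 fun u hu => hstab u hu x y
  set I₁ := ∫ s in Ioi 0, gaussianEnvelope d c (dist x y) (t ^ (1 / α) * s) * g s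
  set I₂ := ∫ s in Ioi 0, gaussianEnvelope (d + 2 * γ) c (dist x y) (t ^ (1 / α) * s) * g s
  have hbound : ∀ B₁ B₂ : ℝ, 0 ≤ B₁ → 0 ≤ B₂ → I₁ ≤ K₁ * B₁ → I₂ ≤ K₂ * B₂ →
      c' * ε * (I₁ + I₂) ≤ c' * (K₁ + K₂) * ε * (B₁ + B₂) := by
    intro B₁ B₂ hB₁ hB₂ h₁ h₂
    calc c' * ε * (I₁ + I₂) ≤ c' * ε * ((K₁ + K₂) * B₁ + (K₁ + K₂) * B₂) := by
          gcongr
          · exact h₁.trans (by gcongr; linarith)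
          · exact h₂.trans (by gcongr; linarith)
      _ = c' * (K₁ + K₂) * ε * (B₁ + B₂) := by ring
  refine ⟨hdiff.trans (hbound _ _ (by positivity) (by positivity) (hI₁ t ht _).1 (hI₂ t ht _).1),
    fun hxy => hdiff.trans (hbound _ _ (by positivity) (by positivity) ?_ ?_)⟩
  · exact (hI₁ t ht _).2 (dist_pos.2 hxy)
  · exact (hI₂ t ht _).2 (dist_pos.2 hxy)

/-- Stability of subordinated kernels: the weighted Gaussian bound on `|p − p̃|` implies
`|q − q̃| ≤ C ε [min(t^{-d/(2α)}, t/|x-y|^{d+2α}) + min(t^{-(d+2γ)/(2α)}, t/|x-y|^{d+2γ+2α})]`. -/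
theorem subordinated_kernel_stability {d : ℕ}
    (α γ c c' ε chat : ℝ) (hα : α ∈ Ioo (0 : ℝ) 1) (hγ : γ ∈ Ioo (0 : ℝ) 1)
    (hc : 0 < c) (hc' : 0 < c') (hε : 0 ≤ ε) (hchat : 0 < chat)
    (g : ℝ → ℝ) (hgm : Measurable g) (hgnn : ∀ s : ℝ, 0 < s → 0 ≤ g s)
    (hgint : (∫ s in Ioi (0 : ℝ), g s) = 1)
    (hgb : ∀ s : ℝ, 0 < s → g s ≤ chat * s ^ (-1 - α))
    (hgl : ∀ m : ℝ, 0 ≤ m → IntegrableOn (fun s : ℝ => s ^ (-m) * g s) (Ioc 0 1))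
    (p pt : ℝ → EuclideanSpace ℝ (Fin d) → EuclideanSpace ℝ (Fin d) → ℝ)
    (hpm : ∀ x y, AEStronglyMeasurable (fun s : ℝ => p s x y) (volume.restrict (Ioi 0)))
    (hptm : ∀ x y, AEStronglyMeasurable (fun s : ℝ => pt s x y) (volume.restrict (Ioi 0)))
    (hpi : ∀ t : ℝ, 0 < t → ∀ x y : EuclideanSpace ℝ (Fin d),
      IntegrableOn (fun s : ℝ => p (t ^ (1 / α) * s) x y * g s) (Ioi 0) ∧
      IntegrableOn (fun s : ℝ => pt (t ^ (1 / α) * s) x y * g s) (Ioi 0))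
    (hstab : ∀ t : ℝ, 0 < t → ∀ x y : EuclideanSpace ℝ (Fin d),
      |p t x y - pt t x y|
        ≤ c' * t ^ (-(d : ℝ) / 2) * Real.exp (-(dist x y) ^ 2 / (c * t)) *
            (t ^ (-γ) + 1) * ε) :
    ∃ C : ℝ, 0 < C ∧ ∀ t : ℝ, 0 < t → ∀ x y : EuclideanSpace ℝ (Fin d),
      |(∫ s in Ioi (0 : ℝ), p (t ^ (1 / α) * s) x y * g s) -
          (∫ s in Ioi (0 : ℝ), pt (t ^ (1 / α) * s) x y * g s)|
        ≤ C * ε * (t ^ (-(d : ℝ) / (2 * α)) + t ^ (-((d : ℝ) + 2 * γ) / (2 * α))) ∧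
      (x ≠ y →
        |(∫ s in Ioi (0 : ℝ), p (t ^ (1 / α) * s) x y * g s) -
            (∫ s in Ioi (0 : ℝ), pt (t ^ (1 / α) * s) x y * g s)|
          ≤ C * ε *
              (min (t ^ (-(d : ℝ) / (2 * α))) (t / dist x y ^ ((d : ℝ) + 2 * α)) +
                min (t ^ (-((d : ℝ) + 2 * γ) / (2 * α)))
                  (t / dist x y ^ ((d : ℝ) + 2 * γ + 2 * α)))) :=
  subordinated_kernel_stability_general α γ c c' ε chat hα hγ hc hc' hε hchat g hgm hgnn hgb hgl p
    pt hpi hstab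
end
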